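/- Let δ ∈ (0,1) and let μ_δ be the stationary distribution with μ_δ(0) = 2δ/(1+δ), μ_δ(2i) = (2δ(1-δ)/(1+δ)³)((1-δ)/(1+δ))^{2(|i|-1)}. Then for the oscillating random walk with constant drift δ started from μ_δ, P_{μ_δ}(T > 2n) ≤ 2(1+δ²)^{-n} for every n ≥ 1, where T is the hitting time of 0. -/

import Mathlib

/-- One-step transition probability of the nearest-neighbor random walk on ℤ with
constant drift `δ` toward the origin: from 0 it steps to ±1 with probability 1/2;
from `i ≠ 0` it steps away from 0 with probability `(1-δ)/2` and toward 0 with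
probability `(1+δ)/2`. -/
noncomputable def stepP (δ : ℝ) (i j : ℤ) : ℝ :=
  if i = 0 then (if j = 1 ∨ j = -1 then 1 / 2 else 0)
  else if j = i + 1 then (if 0 < i then (1 - δ) / 2 else (1 + δ) / 2)
  else if j = i - 1 then (if 0 < i then (1 + δ) / 2 else (1 - δ) / 2)
  else 0

/-- The claimed stationary distribution of the two-step chain of the oscillating
random walk with drift `δ`: `muD δ i` is the mass of the even point `2*i`. -/
noncomputable def muD (δ : ℝ) (i : ℤ) : ℝ :=
  if i = 0 then 2 * δ / (1 + δ)
  else (2 * δ * (1 - δ) / (1 + δ) ^ 3) * ((1 - δ) / (1 + δ)) ^ (2 * (i.natAbs - 1))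


/-- `survP δ n j` is the probability that the walk started at `j` does not visit `0`
during the first `n` steps, i.e. `P_j(T > n)` where `T = inf{n ≥ 0 : X_n = 0}`. -/
noncomputable def survP (δ : ℝ) : ℕ → ℤ → ℝ
  | 0, j => if j = 0 then 0 else 1
  | n + 1, j =>
      if j = 0 then 0
      else stepP δ j (j + 1) * survP δ n (j + 1) + stepP δ j (j - 1) * survP δ n (j - 1)

/-!
For `ρ = √((1+δ)/(1-δ))` the function `h j = ρ ^ |j|` satisfies `P h ≤ √(1-δ²) h` for the walk
killed at `0` (with equality away from `±1`), so by induction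
`P_j(T > n) ≤ (1-δ²)^(n/2) ρ^|j|`. At even times and even points this reads
`P_{2i}(T > 2n) ≤ (1-δ²)^n r^(-|i|)` with `r = (1-δ)/(1+δ)`, while `μ_δ(2i)` decays like
`r^(2|i|)`; summing the resulting geometric series gives `2(1-δ²)^n/(1+δ) ≤ 2(1+δ²)^(-n)`.
-/

theorem tsum_int_le_of_le_geometric {F : ℤ → ℝ} {c r : ℝ} (hF : ∀ j, 0 ≤ F j) (h0 : F 0 = 0)
    (hr0 : 0 ≤ r) (hr1 : r < 1) (hpos : ∀ k : ℕ, F (k + 1) ≤ c * r ^ k)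
    (hneg : ∀ k : ℕ, F (-(k + 1)) ≤ c * r ^ k) :
    ∑' j, F j ≤ 2 * c / (1 - r) := by
  have hgeom : Summable fun k : ℕ => c * r ^ k :=
    (summable_geometric_of_lt_one hr0 hr1).mul_left c
  have hsum_pos : Summable fun k : ℕ => F (k + 1) :=
    hgeom.of_nonneg_of_le (fun _ => hF _) hpos
  have hsum_neg : Summable fun k : ℕ => F (-(k + 1)) :=
    hgeom.of_nonneg_of_le (fun _ => hF _) hneg
  have htsum_geom : ∑' k : ℕ, c * r ^ k = c / (1 - r) := by
    rw [tsum_mul_left, tsum_geometric_of_lt_one hr0 hr1, div_eq_mul_inv]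
  calc ∑' j, F j = ∑' k : ℕ, F (k + 1) + F 0 + ∑' k : ℕ, F (-(k + 1)) :=
        tsum_of_add_one_of_neg_add_one hsum_pos hsum_neg
    _ ≤ c / (1 - r) + 0 + c / (1 - r) := by
        rw [h0, ← htsum_geom]
        gcongr
        · exact hpos _
        · exact hneg _
    _ = 2 * c / (1 - r) := by ring

section Survival

variable {δ : ℝ}

theorem survP_zero (n : ℕ) : survP δ n 0 = 0 := by
  cases n <;> simp [survP]

theorem survP_succ_of_pos {j : ℤ} (hj : 0 < j) (n : ℕ) :
    survP δ (n + 1) j = (1 - δ) / 2 * survP δ n (j + 1) + (1 + δ) / 2 * survP δ n (j - 1) := by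
  have hne : j - 1 ≠ j + 1 := by omega
  simp [survP, stepP, hj, hj.ne', hne]

theorem survP_succ_of_neg {j : ℤ} (hj : j < 0) (n : ℕ) :
    survP δ (n + 1) j = (1 + δ) / 2 * survP δ n (j + 1) + (1 - δ) / 2 * survP δ n (j - 1) := by
  have hne : j - 1 ≠ j + 1 := by omega
  simp [survP, stepP, hj.not_gt, hj.ne, hne]

theorem survP_neg (n : ℕ) (j : ℤ) : survP δ n (-j) = survP δ n j := by
  induction n generalizing j with
  | zero => simp [survP]
  | succ n ih =>
    rcases lt_trichotomy j 0 with hj | rfl | hj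
    · rw [survP_succ_of_pos (neg_pos.mpr hj), survP_succ_of_neg hj,
        show -j + 1 = -(j - 1) by ring, show -j - 1 = -(j + 1) by ring, ih, ih]
      ring
    · simp
    · rw [survP_succ_of_neg (neg_neg_of_pos hj), survP_succ_of_pos hj,
        show -j + 1 = -(j - 1) by ring, show -j - 1 = -(j + 1) by ring, ih, ih]
      ring

theorem survP_nonneg (hδ₀ : -1 ≤ δ) (hδ₁ : δ ≤ 1) (n : ℕ) (j : ℤ) : 0 ≤ survP δ n j := by
  induction n generalizing j with
  | zero => simp only [survP]; split_ifs <;> norm_num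
  | succ n ih =>
    rcases lt_trichotomy j 0 with hj | rfl | hj
    · rw [survP_succ_of_neg hj]
      exact add_nonneg (mul_nonneg (by linarith) (ih _)) (mul_nonneg (by linarith) (ih _))
    · rw [survP_zero]
    · rw [survP_succ_of_pos hj]
      exact add_nonneg (mul_nonneg (by linarith) (ih _)) (mul_nonneg (by linarith) (ih _))

/-- `hκ` says that `k ↦ ρ ^ k` is a supersolution of the eigenvalue equation
`(1-δ)/2 h(k+1) + (1+δ)/2 h(k-1) = κ h(k)` of the walk killed at `0`. -/
theorem survP_natCast_le {ρ κ : ℝ} (hδ₀ : -1 ≤ δ) (hδ₁ : δ ≤ 1) (hρ : 1 ≤ ρ)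
    (hκ : (1 - δ) / 2 * ρ ^ 2 + (1 + δ) / 2 ≤ κ * ρ) (n k : ℕ) :
    survP δ n k ≤ κ ^ n * ρ ^ k := by
  have hκ₀ : 0 ≤ κ := by nlinarith
  induction n generalizing k with
  | zero =>
    rcases k with _ | k
    · simp [survP]
    · rw [survP, if_neg (by omega)]
      simpa using one_le_pow₀ hρ
  | succ n ih =>
    rcases k with _ | k
    · rw [Nat.cast_zero, survP_zero]; positivity
    · have hup := ih (k + 2)
      have hdown := ih k
      push_cast at hup ⊢
      rw [survP_succ_of_pos (by positivity), add_sub_cancel_right, add_assoc,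
        show (1 : ℤ) + 1 = 2 from rfl]
      calc (1 - δ) / 2 * survP δ n (k + 2) + (1 + δ) / 2 * survP δ n k
          ≤ (1 - δ) / 2 * (κ ^ n * ρ ^ (k + 2)) + (1 + δ) / 2 * (κ ^ n * ρ ^ k) := by
            gcongr; linarith
        _ = κ ^ n * ρ ^ k * ((1 - δ) / 2 * ρ ^ 2 + (1 + δ) / 2) := by ring
        _ ≤ κ ^ n * ρ ^ k * (κ * ρ) := by gcongr
        _ = κ ^ (n + 1) * ρ ^ (k + 1) := by ring

theorem survP_le {ρ κ : ℝ} (hδ₀ : -1 ≤ δ) (hδ₁ : δ ≤ 1) (hρ : 1 ≤ ρ)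
    (hκ : (1 - δ) / 2 * ρ ^ 2 + (1 + δ) / 2 ≤ κ * ρ) (n : ℕ) (j : ℤ) :
    survP δ n j ≤ κ ^ n * ρ ^ j.natAbs := by
  obtain ⟨m, rfl | rfl⟩ := Int.eq_nat_or_neg j
  · exact survP_natCast_le hδ₀ hδ₁ hρ hκ n m
  · rw [survP_neg, Int.natAbs_neg, Int.natAbs_natCast]
    exact survP_natCast_le hδ₀ hδ₁ hρ hκ n m

theorem survP_two_mul_le (hδ₀ : 0 ≤ δ) (hδ₁ : δ < 1) (n : ℕ) (j : ℤ) :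
    survP δ (2 * n) (2 * j) ≤ (1 - δ ^ 2) ^ n * ((1 + δ) / (1 - δ)) ^ j.natAbs := by
  have h1 : 0 < 1 - δ := by linarith
  have hq : 0 ≤ (1 + δ) / (1 - δ) := by positivity
  have hκ2 : √(1 - δ ^ 2) ^ 2 = 1 - δ ^ 2 := Real.sq_sqrt (by nlinarith)
  have hρ2 : √((1 + δ) / (1 - δ)) ^ 2 = (1 + δ) / (1 - δ) := Real.sq_sqrt hq
  have hρ : 1 ≤ √((1 + δ) / (1 - δ)) := Real.one_le_sqrt.mpr ((one_le_div h1).mpr (by linarith))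
  have hκρ : √(1 - δ ^ 2) * √((1 + δ) / (1 - δ)) = 1 + δ := by
    rw [← Real.sqrt_mul (by nlinarith), show (1 - δ ^ 2) * ((1 + δ) / (1 - δ)) = (1 + δ) * (1 + δ)
      by field_simp; ring, Real.sqrt_mul_self (by linarith)]
  have hκ : (1 - δ) / 2 * √((1 + δ) / (1 - δ)) ^ 2 + (1 + δ) / 2
      ≤ √(1 - δ ^ 2) * √((1 + δ) / (1 - δ)) := by
    rw [hρ2, hκρ]
    apply le_of_eq
    field_simp
    ring
  have := survP_le (by linarith) hδ₁.le hρ hκ (2 * n) (2 * j)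
  rwa [Int.natAbs_mul, show (2 : ℤ).natAbs = 2 from rfl, pow_mul, pow_mul, hκ2, hρ2]
    at this

end Survival

section Stationary

variable {δ : ℝ}

theorem muD_neg (j : ℤ) : muD δ (-j) = muD δ j := by
  simp [muD]

theorem muD_nonneg (hδ₀ : 0 ≤ δ) (hδ₁ : δ ≤ 1) (j : ℤ) : 0 ≤ muD δ j := by
  have : 0 ≤ 1 - δ := by linarith
  unfold muD; split_ifs <;> positivity

theorem muD_mul_survP_le (hδ₀ : 0 < δ) (hδ₁ : δ < 1) (n k : ℕ) :
    muD δ (k + 1) * survP δ (2 * n) (2 * (k + 1))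
      ≤ 2 * δ / (1 + δ) ^ 2 * (1 - δ ^ 2) ^ n * ((1 - δ) / (1 + δ)) ^ k := by
  have h1 : 0 < 1 - δ := by linarith
  have hrq : (1 - δ) / (1 + δ) * ((1 + δ) / (1 - δ)) = 1 := by field_simp
  have hcoef : 2 * δ * (1 - δ) / (1 + δ) ^ 3 * ((1 + δ) / (1 - δ)) = 2 * δ / (1 + δ) ^ 2 := by
    field_simp
  set r := (1 - δ) / (1 + δ)
  set q := (1 + δ) / (1 - δ)
  have hmu : muD δ (k + 1) = 2 * δ * (1 - δ) / (1 + δ) ^ 3 * r ^ (2 * k) := by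
    rw [muD, if_neg (by omega)]
    congr 3
  have hsurv : survP δ (2 * n) (2 * (k + 1)) ≤ (1 - δ ^ 2) ^ n * q ^ (k + 1) := by
    have := survP_two_mul_le hδ₀.le hδ₁ n (k + 1)
    rwa [show ((k : ℤ) + 1).natAbs = k + 1 by omega] at this
  clear_value r q
  calc muD δ (k + 1) * survP δ (2 * n) (2 * (k + 1))
      ≤ muD δ (k + 1) * ((1 - δ ^ 2) ^ n * q ^ (k + 1)) :=
        mul_le_mul_of_nonneg_left hsurv (muD_nonneg hδ₀.le hδ₁.le _)
    _ = 2 * δ * (1 - δ) / (1 + δ) ^ 3 * q * (1 - δ ^ 2) ^ n * r ^ k * (r * q) ^ k := by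
        rw [hmu]; ring
    _ = 2 * δ / (1 + δ) ^ 2 * (1 - δ ^ 2) ^ n * r ^ k := by
        rw [hrq, one_pow, mul_one, hcoef]

end Stationary

theorem one_sub_sq_pow_le_inv_one_add_sq_pow {δ : ℝ} (hδ : δ ^ 2 ≤ 1) (n : ℕ) :
    (1 - δ ^ 2) ^ n ≤ ((1 + δ ^ 2) ^ n)⁻¹ := by
  rw [← mul_one ((1 + δ ^ 2) ^ n)⁻¹, le_inv_mul_iff₀ (by positivity), ← mul_pow]
  exact pow_le_one₀ (mul_nonneg (by positivity) (by linarith)) (by nlinarith [sq_nonneg (δ ^ 2)])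

theorem hitting_tail_bound_general (δ : ℝ) (hδ0 : 0 < δ) (hδ1 : δ < 1) (n : ℕ) :
    ∑' j : ℤ, muD δ j * survP δ (2 * n) (2 * j) ≤ 2 * ((1 + δ ^ 2) ^ n)⁻¹ := by
  have hr1 : (1 - δ) / (1 + δ) < 1 := (div_lt_one (by linarith)).mpr (by linarith)
  have hbound := tsum_int_le_of_le_geometric (F := fun j => muD δ j * survP δ (2 * n) (2 * j))
    (fun j => mul_nonneg (muD_nonneg hδ0.le hδ1.le j) (survP_nonneg (by linarith) hδ1.le _ _))
    (by simp [survP_zero]) (div_nonneg (by linarith) (by linarith)) hr1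
    (fun k => by exact_mod_cast muD_mul_survP_le hδ0 hδ1 n k)
    (fun k => by
      rw [muD_neg, mul_neg, survP_neg]; exact_mod_cast muD_mul_survP_le hδ0 hδ1 n k)
  have hδ2 : δ ^ 2 ≤ 1 := by nlinarith
  calc ∑' j : ℤ, muD δ j * survP δ (2 * n) (2 * j)
      ≤ 2 * (2 * δ / (1 + δ) ^ 2 * (1 - δ ^ 2) ^ n) / (1 - (1 - δ) / (1 + δ)) := hbound
    _ = 2 * (1 - δ ^ 2) ^ n / (1 + δ) := by field_simp [hδ0.ne']; ring
    _ ≤ 2 * (1 - δ ^ 2) ^ n :=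
        div_le_self (mul_nonneg zero_le_two (pow_nonneg (by linarith) n)) (by linarith)
    _ ≤ 2 * ((1 + δ ^ 2) ^ n)⁻¹ := by gcongr; exact one_sub_sq_pow_le_inv_one_add_sq_pow hδ2 n

/-- For the oscillating random walk with constant drift `δ ∈ (0,1)` started from the
stationary distribution `μ_δ`, the hitting time `T` of the origin satisfies
`P_{μ_δ}(T > 2n) ≤ 2(1+δ²)^{-n}` for every `n ≥ 1`. -/
theorem hitting_tail_bound (δ : ℝ) (hδ0 : 0 < δ) (hδ1 : δ < 1) (n : ℕ) (hn : 1 ≤ n) :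
    ∑' j : ℤ, muD δ j * survP δ (2 * n) (2 * j) ≤ 2 * ((1 + δ ^ 2) ^ n)⁻¹ :=
  hitting_tail_bound_general δ hδ0 hδ1 n
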